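/- Let C be a category, let W be a class of morphisms of C, and call an object Z of C W-local if for every morphism f : A ⟶ B in W, precomposition with f gives a bijection from Hom(B, Z) to Hom(A, Z). Let X be a W-local object. Then an object g : U ⟶ X of the slice category Over X is local with respect to the class of morphisms φ of Over X whose underlying morphism φ.left lies in W, if and only if U is W-local in C. -/

import Mathlib

/-!
A morphism `B ⟶ g` in `Over X` is a morphism `B.left ⟶ g.left` over `X`, so
`Hom_{Over X}(B, g)` is the fibre of `Hom(B.left, g.left) → Hom(B.left, X)` over `B.hom`.
For `f : A ⟶ B` in `W`, precomposition with `f` maps this fibration to the corresponding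
one over `A`, and since `X` is `W`-local it is a bijection on the bases. Hence it is a
bijection on total sets exactly when it is a bijection on every fibre.
-/

open CategoryTheory Limits

universe v u

namespace CategoryTheory.Over

variable {C : Type u} [Category.{v} C] {X : C} (g : Over X)

lemma precomp_injective_of_left {A B : Over X} (φ : A ⟶ B)
    (h : Function.Injective (fun ψ : B.left ⟶ g.left => φ.left ≫ ψ)) :
    Function.Injective (fun ψ : B ⟶ g => φ ≫ ψ) := fun _ _ hψ =>
  OverMorphism.ext (h (congrArg CommaMorphism.left hψ))

lemma precomp_surjective_of_left {A B : Over X} (φ : A ⟶ B)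
    (hX : Function.Injective (fun b : B.left ⟶ X => φ.left ≫ b))
    (h : Function.Surjective (fun ψ : B.left ⟶ g.left => φ.left ≫ ψ)) :
    Function.Surjective (fun ψ : B ⟶ g => φ ≫ ψ) := by
  intro ψ
  obtain ⟨u, hu⟩ := h ψ.left
  have hu_over : u ≫ g.hom = B.hom := hX <| by
    simp only [← Category.assoc, hu, w]
  exact ⟨homMk u hu_over, OverMorphism.ext hu⟩

lemma precomp_injective_of_over {A B : C} (f : A ⟶ B)
    (hX : Function.Injective (fun b : B ⟶ X => f ≫ b))
    (h : ∀ b : B ⟶ X, Function.Injective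
      (fun ψ : mk b ⟶ g => (homMk f rfl : mk (f ≫ b) ⟶ mk b) ≫ ψ)) :
    Function.Injective (fun ψ : B ⟶ g.left => f ≫ ψ) := by
  intro ψ₁ ψ₂ hψ
  have hψ_over : ψ₁ ≫ g.hom = ψ₂ ≫ g.hom := hX <| by
    simp only [← Category.assoc] at hψ ⊢
    rw [hψ]
  have := h (ψ₁ ≫ g.hom) (a₁ := homMk ψ₁) (a₂ := homMk ψ₂ hψ_over.symm)
    (OverMorphism.ext hψ)
  exact congrArg CommaMorphism.left this

lemma precomp_surjective_of_over {A B : C} (f : A ⟶ B)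
    (hX : Function.Surjective (fun b : B ⟶ X => f ≫ b))
    (h : ∀ b : B ⟶ X, Function.Surjective
      (fun ψ : mk b ⟶ g => (homMk f rfl : mk (f ≫ b) ⟶ mk b) ≫ ψ)) :
    Function.Surjective (fun ψ : B ⟶ g.left => f ≫ ψ) := by
  intro ψ
  obtain ⟨b, hb⟩ := hX (ψ ≫ g.hom)
  obtain ⟨Ψ, hΨ⟩ := h b (homMk ψ hb.symm)
  exact ⟨Ψ.left, congrArg CommaMorphism.left hΨ⟩

theorem isLocal_inverseImage_forget_iff {W : MorphismProperty C} (hX : W.isLocal X) :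
    (W.inverseImage (forget X)).isLocal g ↔ W.isLocal g.left := by
  constructor
  · intro hg A B f hf
    have hfibre (b : B ⟶ X) := hg (homMk f rfl : mk (f ≫ b) ⟶ mk b) hf
    exact ⟨precomp_injective_of_over g f (hX f hf).1 fun b => (hfibre b).1,
      precomp_surjective_of_over g f (hX f hf).2 fun b => (hfibre b).2⟩
  · intro hg A B φ hφ
    exact ⟨precomp_injective_of_left g φ (hg φ.left hφ).1,
      precomp_surjective_of_left g φ (hX φ.left hφ).1 (hg φ.left hφ).2⟩

end CategoryTheory.Over

theorem statement12 {C : Type u} [Category.{v} C] (W : MorphismProperty C) (X : C)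
    (hX : ∀ {A B : C} (f : A ⟶ B), W f →
      Function.Bijective (fun g : B ⟶ X => f ≫ g))
    (g : Over X) :
    (∀ {A B : Over X} (φ : A ⟶ B), W φ.left →
        Function.Bijective (fun ψ : B ⟶ g => φ ≫ ψ)) ↔
      (∀ {A B : C} (f : A ⟶ B), W f →
        Function.Bijective (fun ψ : B ⟶ g.left => f ≫ ψ)) :=
  Over.isLocal_inverseImage_forget_iff g (W := W) fun _ _ f hf => hX f hf
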